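/- arXiv:2406.14304 — 8 statements merged into one kernel-verified Lean document; each statement's English description precedes it below -/
import Mathlib

section
/- For α ∈ (0,1) ∪ (1,∞), the power (Tsallis) score g_Power(x,q) = (α/(α-1))·q(x)^{α-1} − ‖q‖_α^α is a proper scoring rule: for all pmfs p and q on a finite set 𝒳, E_{X∼p}[g_Power(X,p)] ≥ E_{X∼p}[g_Power(X,q)], and the maximum value equals (1/(α-1))·‖p‖_α^α = (1/(α-1))·∑_x p(x)^α. -/
open Finset in
private lemma pow_key {α : ℝ} (hα : α ∈ Set.Ioo (0:ℝ) 1 ∪ Set.Ioi (1:ℝ))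
    {a b : ℝ} (ha : 0 ≤ a) (hb : 0 ≤ b) (hb' : α < 1 → 0 < b) :
    α / (α - 1) * (a * b ^ (α - 1)) - b ^ α ≤ 1 / (α - 1) * a ^ α := by
  rcases hα with h1 | h1
  · -- 0 < α < 1 : weighted AM-GM
    obtain ⟨hα0, hα1⟩ := h1
    have hbpos : 0 < b := hb' hα1
    have key : a ^ α * b ^ (1 - α) ≤ α * a + (1 - α) * b :=
      Real.geom_mean_le_arith_mean2_weighted (le_of_lt hα0) (by linarith) ha hb (by ring)
    have hbp : (0:ℝ) < b ^ (α - 1) := Real.rpow_pos_of_pos hbpos _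
    have h2 : (a ^ α * b ^ (1 - α)) * b ^ (α - 1) ≤ (α * a + (1 - α) * b) * b ^ (α - 1) :=
      mul_le_mul_of_nonneg_right key hbp.le
    have e1 : b ^ (1 - α) * b ^ (α - 1) = 1 := by
      rw [← Real.rpow_add hbpos]; norm_num
    have e2 : b * b ^ (α - 1) = b ^ α := by
      nth_rewrite 1 [← Real.rpow_one b]
      rw [← Real.rpow_add hbpos]; ring_nf
    have h3 : a ^ α ≤ α * (a * b ^ (α - 1)) + (1 - α) * b ^ α := by
      calc a ^ α = (a ^ α * b ^ (1 - α)) * b ^ (α - 1) := by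
            rw [mul_assoc, e1, mul_one]
        _ ≤ (α * a + (1 - α) * b) * b ^ (α - 1) := h2
        _ = α * (a * b ^ (α - 1)) + (1 - α) * (b * b ^ (α - 1)) := by ring
        _ = α * (a * b ^ (α - 1)) + (1 - α) * b ^ α := by rw [e2]
    have h1mα : (0:ℝ) < 1 - α := by linarith
    have hne : α - 1 ≠ 0 := by linarith
    have hne' : (1:ℝ) - α ≠ 0 := by linarith
    rw [← sub_nonneg]
    have hE : 1 / (α - 1) * a ^ α - (α / (α - 1) * (a * b ^ (α - 1)) - b ^ α)
        = (1 / (1 - α)) * (α * (a * b ^ (α - 1)) + (1 - α) * b ^ α - a ^ α) := by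
      field_simp
      ring
    rw [hE]
    exact mul_nonneg (le_of_lt (one_div_pos.mpr h1mα)) (by linarith)
  · -- α > 1 : Young's inequality
    have h1 : 1 < α := h1
    have hpos : (0:ℝ) < α - 1 := by linarith
    have hα0 : (0:ℝ) < α := by linarith
    have hne : α - 1 ≠ 0 := by linarith
    have hconj : Real.HolderConjugate α (α / (α - 1)) := (Real.holderConjugate_iff_eq_conjExponent h1).mpr rfl
    have young := Real.young_inequality_of_nonneg ha (Real.rpow_nonneg hb (α - 1)) hconj
    have e : (b ^ (α - 1)) ^ (α / (α - 1)) = b ^ α := by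
      rw [← Real.rpow_mul hb]
      congr 1
      field_simp
    rw [e] at young
    have e2 : b ^ α / (α / (α - 1)) = (α - 1) * b ^ α / α := by
      field_simp
    rw [e2] at young
    -- young : a * b ^ (α - 1) ≤ a ^ α / α + (α - 1) * b ^ α / α
    rw [← sub_nonneg]
    have hE : 1 / (α - 1) * a ^ α - (α / (α - 1) * (a * b ^ (α - 1)) - b ^ α)
        = (α / (α - 1)) * (a ^ α / α + (α - 1) * b ^ α / α - a * b ^ (α - 1)) := by
      field_simp
      ring
    rw [hE]
    exact mul_nonneg (le_of_lt (div_pos hα0 hpos)) (by linarith)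

private lemma mul_rpow_self {a α : ℝ} (ha : 0 ≤ a) (hα : 0 < α) :
    a * a ^ (α - 1) = a ^ α := by
  rcases eq_or_lt_of_le ha with h | h
  · rw [← h, Real.zero_rpow (ne_of_gt hα), zero_mul]
  · nth_rewrite 1 [← Real.rpow_one a]
    rw [← Real.rpow_add h]; ring_nf

/-- The power (Tsallis) score of order `α` is a proper scoring rule, with optimal
expected value `(1/(α-1)) * ∑ p(x)^α`. -/
theorem stmt_2 {𝒳 : Type*} [Fintype 𝒳]
    (α : ℝ) (hα : α ∈ Set.Ioo (0:ℝ) 1 ∪ Set.Ioi (1:ℝ))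
    (p q : 𝒳 → ℝ) (hp : ∀ x, 0 ≤ p x) (hps : ∑ x, p x = 1)
    (hq : ∀ x, 0 ≤ q x) (hqs : ∑ x, q x = 1)
    (hq' : α < 1 → ∀ x, 0 < q x) :
    (∑ x, p x * ((α / (α - 1)) * q x ^ (α - 1) - ∑ x', q x' ^ α)
      ≤ ∑ x, p x * ((α / (α - 1)) * p x ^ (α - 1) - ∑ x', p x' ^ α)) ∧
    ∑ x, p x * ((α / (α - 1)) * p x ^ (α - 1) - ∑ x', p x' ^ α)
      = (1 / (α - 1)) * ∑ x, p x ^ α := by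
  have hα0 : 0 < α := by rcases hα with h | h; exact h.1; linarith [Set.mem_Ioi.1 h]
  have hα1 : α ≠ 1 := by rcases hα with h | h; exact ne_of_lt h.2; exact ne_of_gt h
  have hαm1 : α - 1 ≠ 0 := sub_ne_zero_of_ne hα1
  have heq : ∑ x, p x * ((α / (α - 1)) * p x ^ (α - 1) - ∑ x', p x' ^ α)
      = (1 / (α - 1)) * ∑ x, p x ^ α := by
    have expand : ∀ x, p x * ((α / (α - 1)) * p x ^ (α - 1) - ∑ x', p x' ^ α)
        = (α / (α - 1)) * p x ^ α - p x * ∑ x', p x' ^ α := by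
      intro x
      rw [← mul_rpow_self (hp x) hα0]; ring
    rw [Finset.sum_congr rfl (fun x _ => expand x), Finset.sum_sub_distrib,
      ← Finset.mul_sum, ← Finset.sum_mul, hps, one_mul]
    field_simp
    ring
  refine ⟨?_, heq⟩
  rw [heq]
  have expandq : ∀ x, p x * ((α / (α - 1)) * q x ^ (α - 1) - ∑ x', q x' ^ α)
      = (α / (α - 1)) * (p x * q x ^ (α - 1)) - p x * ∑ x', q x' ^ α := by
    intro x; ring
  rw [Finset.sum_congr rfl (fun x _ => expandq x), Finset.sum_sub_distrib,
    ← Finset.mul_sum, ← Finset.sum_mul, hps, one_mul, Finset.mul_sum, Finset.mul_sum,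
    ← Finset.sum_sub_distrib]
  exact Finset.sum_le_sum fun x _ => pow_key hα (hp x) (hq x) (fun h => hq' h x)
end

section
/- For α ∈ (0,1) ∪ (1,∞), the expected α-score E_{X∼p}[(α/(α-1))·q(X)^{(α-1)/α}] over pmfs q on a finite set 𝒳 is maximized at the α-tilted distribution q = p_α defined by p_α(x) = p(x)^α / ∑_{x'} p(x')^α, and the maximum value equals (α/(α-1))·‖p‖_α. -/
lemma bern_neg {β t : ℝ} (hβ : β ≤ 0) (ht : 0 < t) : 1 + β * (t - 1) ≤ t ^ β := by
  have h1 : t ^ β = Real.exp (Real.log t * β) := Real.rpow_def_of_pos ht β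
  have h2 : Real.log t * β + 1 ≤ Real.exp (Real.log t * β) := Real.add_one_le_exp _
  have h3 : Real.log t ≤ t - 1 := Real.log_le_sub_one_of_pos ht
  nlinarith [mul_le_mul_of_nonpos_left h3 hβ]

lemma bern_pos {β t : ℝ} (hβ0 : 0 ≤ β) (hβ1 : β ≤ 1) (ht : 0 ≤ t) :
    t ^ β ≤ 1 + β * (t - 1) := by
  have := rpow_one_add_le_one_add_mul_self (s := t - 1) (by linarith) hβ0 hβ1
  simpa using this

/-- tangent line inequality for concave rpow, 0 ≤ β ≤ 1 -/
lemma tangent_pos {β q r : ℝ} (hβ0 : 0 ≤ β) (hβ1 : β ≤ 1) (hq : 0 ≤ q) (hr : 0 < r) :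
    q ^ β ≤ r ^ β + β * r ^ (β - 1) * (q - r) := by
  have h := bern_pos hβ0 hβ1 (div_nonneg hq hr.le) (β := β) (t := q / r)
  have hd : (q / r) ^ β = q ^ β / r ^ β := Real.div_rpow hq hr.le β
  have hrβ : (0:ℝ) < r ^ β := Real.rpow_pos_of_pos hr β
  have hr1 : r ^ (β - 1) = r ^ β / r := by
    rw [Real.rpow_sub hr, Real.rpow_one]
  rw [hd, div_le_iff₀ hrβ] at h
  calc q ^ β ≤ (1 + β * (q / r - 1)) * r ^ β := h
    _ = r ^ β + β * (r ^ β / r) * (q - r) := by field_simp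
    _ = r ^ β + β * r ^ (β - 1) * (q - r) := by rw [hr1]

/-- tangent line inequality for convex rpow, β ≤ 0 -/
lemma tangent_neg {β q r : ℝ} (hβ : β ≤ 0) (hq : 0 < q) (hr : 0 < r) :
    r ^ β + β * r ^ (β - 1) * (q - r) ≤ q ^ β := by
  have h := bern_neg hβ (div_pos hq hr) (β := β)
  have hd : (q / r) ^ β = q ^ β / r ^ β := Real.div_rpow hq.le hr.le β
  have hrβ : (0:ℝ) < r ^ β := Real.rpow_pos_of_pos hr β
  have hr1 : r ^ (β - 1) = r ^ β / r := by
    rw [Real.rpow_sub hr, Real.rpow_one]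
  rw [hd, le_div_iff₀ hrβ] at h
  calc r ^ β + β * r ^ (β - 1) * (q - r)
      = (1 + β * (q / r - 1)) * r ^ β := by rw [hr1]; field_simp
    _ ≤ q ^ β := h

/-- The expected `α`-score is maximized at the `α`-tilted distribution `p_α`,
with maximum value `(α/(α-1)) * ‖p‖_α`. -/
theorem stmt_3 {𝒳 : Type*} [Fintype 𝒳]
    (α : ℝ) (hα : α ∈ Set.Ioo (0:ℝ) 1 ∪ Set.Ioi (1:ℝ))
    (p : 𝒳 → ℝ) (hp : ∀ x, 0 < p x) (hps : ∑ x, p x = 1) :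
    (∀ q : 𝒳 → ℝ, (∀ x, 0 ≤ q x) → ∑ x, q x = 1 → (α < 1 → ∀ x, 0 < q x) →
      ∑ x, p x * ((α / (α - 1)) * q x ^ ((α - 1)/α))
        ≤ ∑ x, p x * ((α / (α - 1)) * (p x ^ α / ∑ x', p x' ^ α) ^ ((α - 1)/α))) ∧
    ∑ x, p x * ((α / (α - 1)) * (p x ^ α / ∑ x', p x' ^ α) ^ ((α - 1)/α))
      = (α / (α - 1)) * (∑ x, p x ^ α) ^ (1/α) := by
  have hα0 : 0 < α := by
    rcases hα with h | h
    · exact h.1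
    · exact lt_trans one_pos h
  have hα1 : α ≠ 1 := by
    rcases hα with h | h
    · exact ne_of_lt h.2
    · exact ne_of_gt h
  rcases isEmpty_or_nonempty 𝒳 with hE | hE
  · constructor
    · intro q _ _ _
      simp
    · simp only [Finset.univ_eq_empty, Finset.sum_empty]
      rw [Real.zero_rpow (by positivity : (1:ℝ)/α ≠ 0), mul_zero]
  set β := (α - 1)/α with hβdef
  set K := α / (α - 1) with hKdef
  have hne : α - 1 ≠ 0 := sub_ne_zero.mpr hα1
  have hKβ : K * β = 1 := by rw [hKdef, hβdef]; field_simp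
  set S := ∑ x, p x ^ α with hSdef
  have hSpos : 0 < S := Finset.sum_pos (fun x _ => Real.rpow_pos_of_pos (hp x) α) Finset.univ_nonempty
  set r : 𝒳 → ℝ := fun x => p x ^ α / S with hrdef
  have hrpos : ∀ x, 0 < r x := fun x => div_pos (Real.rpow_pos_of_pos (hp x) α) hSpos
  have hrsum : ∑ x, r x = 1 := by
    rw [hrdef]
    simp only [← Finset.sum_div]
    rw [← hSdef, div_self hSpos.ne']
  -- the constant c = p x * r x ^ (β - 1)
  have hc : ∀ x, p x * r x ^ (β - 1) = S ^ (1 - β) := by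
    intro x
    have h1 : r x ^ (β - 1) = (p x ^ α) ^ (β - 1) / S ^ (β - 1) :=
      Real.div_rpow (Real.rpow_pos_of_pos (hp x) α).le hSpos.le _
    have h2 : (p x ^ α) ^ (β - 1) = p x ^ (α * (β - 1)) :=
      (Real.rpow_mul (hp x).le α (β - 1)).symm
    have h3 : α * (β - 1) = -1 := by rw [hβdef]; field_simp; ring
    have h4 : p x ^ (-1 : ℝ) = (p x)⁻¹ := by
      rw [Real.rpow_neg_one]
    have h5 : S ^ (β - 1) = (S ^ (1 - β))⁻¹ := by
      rw [← Real.rpow_neg hSpos.le]; ring_nf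
    rw [h1, h2, h3, h4, h5]
    field_simp
    rw [div_self (hp x).ne']
  -- equality part
  have heq : ∑ x, p x * (K * r x ^ β) = K * S ^ (1/α) := by
    have : ∀ x, p x * (K * r x ^ β) = K * (p x ^ α / S ^ β) := by
      intro x
      have h1 : r x ^ β = (p x ^ α) ^ β / S ^ β :=
        Real.div_rpow (Real.rpow_pos_of_pos (hp x) α).le hSpos.le _
      have h2 : (p x ^ α) ^ β = p x ^ (α * β) := (Real.rpow_mul (hp x).le α β).symm
      have h3 : α * β = α - 1 := by rw [hβdef]; field_simp
      have h4 : p x * p x ^ (α - 1) = p x ^ α := by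
        nth_rewrite 1 [← Real.rpow_one (p x)]
        rw [← Real.rpow_add (hp x)]; ring_nf
      rw [h1, h2, h3]
      field_simp
      rw [← h4]
      ring
    rw [Finset.sum_congr rfl (fun x _ => this x), ← Finset.mul_sum, ← Finset.sum_div, ← hSdef]
    have : S / S ^ β = S ^ (1/α) := by
      nth_rewrite 1 [← Real.rpow_one S]
      rw [← Real.rpow_sub hSpos]
      congr 1
      rw [hβdef]; field_simp; ring
    rw [this]
  constructor
  · intro q hq hqs hq'
    have key : ∀ x, p x * (K * q x ^ β) ≤ p x * (K * r x ^ β) + S ^ (1 - β) * (q x - r x) := by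
      intro x
      rcases hα with h | h
      · -- α < 1 : β < 0, K < 0
        have hβneg : β ≤ 0 := by
          apply div_nonpos_of_nonpos_of_nonneg <;> linarith [h.1, h.2]
        have hKneg : K ≤ 0 := div_nonpos_of_nonneg_of_nonpos hα0.le (by linarith [h.2])
        have ht := tangent_neg hβneg (hq' h.2 x) (hrpos x)
        have := mul_le_mul_of_nonpos_left ht hKneg
        have hpx := (hp x).le
        have h2 := mul_le_mul_of_nonneg_left this hpx
        calc p x * (K * q x ^ β) ≤ p x * (K * (r x ^ β + β * r x ^ (β - 1) * (q x - r x))) := h2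
          _ = p x * (K * r x ^ β) + (K * β) * (p x * r x ^ (β - 1)) * (q x - r x) := by ring
          _ = p x * (K * r x ^ β) + S ^ (1 - β) * (q x - r x) := by rw [hKβ, hc x]; ring
      · -- α > 1 : 0 < β < 1, K > 0
        have hβ0 : 0 ≤ β := by
          apply div_nonneg <;> linarith [Set.mem_Ioi.mp h]
        have hβ1 : β ≤ 1 := by
          rw [hβdef, div_le_one hα0]; linarith
        have hKpos : 0 ≤ K := div_nonneg hα0.le (by linarith [Set.mem_Ioi.mp h])
        have ht := tangent_pos hβ0 hβ1 (hq x) (hrpos x)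
        have := mul_le_mul_of_nonneg_left ht hKpos
        have h2 := mul_le_mul_of_nonneg_left this (hp x).le
        calc p x * (K * q x ^ β) ≤ p x * (K * (r x ^ β + β * r x ^ (β - 1) * (q x - r x))) := h2
          _ = p x * (K * r x ^ β) + (K * β) * (p x * r x ^ (β - 1)) * (q x - r x) := by ring
          _ = p x * (K * r x ^ β) + S ^ (1 - β) * (q x - r x) := by rw [hKβ, hc x]; ring
    calc ∑ x, p x * (K * q x ^ β)
        ≤ ∑ x, (p x * (K * r x ^ β) + S ^ (1 - β) * (q x - r x)) :=
          Finset.sum_le_sum (fun x _ => key x)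
      _ = ∑ x, p x * (K * r x ^ β) + S ^ (1 - β) * ((∑ x, q x) - ∑ x, r x) := by
          rw [Finset.sum_add_distrib, ← Finset.mul_sum, Finset.sum_sub_distrib]
      _ = ∑ x, p x * (K * r x ^ β) := by rw [hqs, hrsum]; ring
  · exact heq
end

section
/- Let H = (η, F) with F: Δ_𝒳 → ℝ continuous and concave and η: F(Δ_𝒳) → ℝ continuous and strictly increasing. Then the H-mutual information satisfies the variational characterization I_H(X;Y) := η(F(p_X)) − η(E_Y[F(p_{X|Y}(·|Y))]) = max_{q_{X|Y}} [ η(F(p_X)) − η(E_{X,Y}[ℓ_F(X, q_{X|Y}(·|Y))]) ], where ℓ_F is the proper loss associated to F via ℓ_F(x,q) = F(q) + z_q^⊤(𝟙^x − q) with z_q ∈ ∂F(q), and the maximum is attained at q_{X|Y}(·|y) = p_{X|Y}(·|y). -/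
/-- The probability simplex on a finite set, viewed as functions. -/
def simplex (𝒳 : Type*) [Fintype 𝒳] : Set (𝒳 → ℝ) :=
  {r | (∀ x, 0 ≤ r x) ∧ ∑ x, r x = 1}

/-- Variational characterization of `H`-mutual information: with `H = (η, F)`,
`F` continuous concave with subgradients `z`, `η` continuous strictly increasing,
`I_H(X;Y) = η(F(p_X)) − η(E_Y[F(p_{X|Y})])` is the maximum over families `q_{X|Y}`
of `η(F(p_X)) − η(E_{X,Y}[ℓ_F(X, q_{X|Y}(·|Y))])`, attained at the posterior. -/
theorem stmt_11 {𝒳 𝒴 : Type*} [Fintype 𝒳] [DecidableEq 𝒳] [Fintype 𝒴]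
    (F : (𝒳 → ℝ) → ℝ)
    (hFcont : ContinuousOn F (simplex 𝒳))
    (hFconc : ConcaveOn ℝ (simplex 𝒳) F)
    (z : (𝒳 → ℝ) → 𝒳 → ℝ)
    (hz : ∀ q ∈ simplex 𝒳, ∀ r ∈ simplex 𝒳,
      F r ≤ F q + ∑ x, z q x * (r x - q x))
    (η : ℝ → ℝ) (hη : StrictMono η) (hηc : Continuous η)
    (p : 𝒳 → ℝ) (hp : p ∈ simplex 𝒳)
    (W : 𝒳 → 𝒴 → ℝ) (hW : ∀ x y, 0 ≤ W x y) (hWs : ∀ x, ∑ y, W x y = 1) :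
    IsGreatest
      { v : ℝ | ∃ q : 𝒴 → 𝒳 → ℝ, (∀ y, q y ∈ simplex 𝒳) ∧
          v = η (F p) - η (∑ y, ∑ x, p x * W x y *
                (F (q y) + ∑ x', z (q y) x' * ((if x' = x then 1 else 0) - q y x'))) }
      (η (F p) - η (∑ y, (∑ x, p x * W x y) *
          F (fun x => if (∑ x', p x' * W x' y) = 0 then p x
                      else p x * W x y / ∑ x', p x' * W x' y))) := by
  classical
  obtain ⟨hp0, hp1⟩ := hp
  set Q : 𝒴 → 𝒳 → ℝ := fun y x =>
    if (∑ x', p x' * W x' y) = 0 then p x else p x * W x y / ∑ x', p x' * W x' y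
    with hQdef
  have hQeq : ∀ y, (fun x => if (∑ x', p x' * W x' y) = 0 then p x
      else p x * W x y / ∑ x', p x' * W x' y) = Q y := fun y => rfl
  simp only [hQeq]
  have hs0 : ∀ y, 0 ≤ ∑ x', p x' * W x' y := fun y =>
    Finset.sum_nonneg fun x _ => mul_nonneg (hp0 x) (hW x y)
  have hzero : ∀ y, (∑ x', p x' * W x' y) = 0 → ∀ x, p x * W x y = 0 := by
    intro y hy x
    exact (Finset.sum_eq_zero_iff_of_nonneg
      (fun x _ => mul_nonneg (hp0 x) (hW x y))).1 hy x (Finset.mem_univ x)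
  have hB : ∀ y x', (∑ x, p x * W x y) * Q y x' = p x' * W x' y := by
    intro y x'
    by_cases h : (∑ x', p x' * W x' y) = 0
    · simp [hQdef, h, hzero y h x']
    · rw [hQdef]
      simp only [if_neg h]
      field_simp
  have hQs : ∀ y, Q y ∈ simplex 𝒳 := by
    intro y
    by_cases h : (∑ x', p x' * W x' y) = 0
    · have : Q y = p := by funext x; simp [hQdef, h]
      rw [this]; exact ⟨hp0, hp1⟩
    · constructor
      · intro x
        simp only [hQdef, if_neg h]
        exact div_nonneg (mul_nonneg (hp0 x) (hW x y)) (hs0 y)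
      · simp only [hQdef, if_neg h]
        rw [← Finset.sum_div, div_self h]
  have key : ∀ (y : 𝒴) (r : 𝒳 → ℝ),
      (∑ x, p x * W x y * (F r + ∑ x', z r x' * ((if x' = x then 1 else 0) - r x')))
      = (∑ x, p x * W x y) * (F r + ∑ x', z r x' * (Q y x' - r x')) := by
    intro y r
    have h1 : ∀ x : 𝒳, (∑ x', z r x' * ((if x' = x then 1 else 0) - r x'))
        = z r x - ∑ x', z r x' * r x' := by
      intro x
      simp [mul_sub, Finset.sum_sub_distrib, mul_ite, Finset.sum_ite_eq']
    calc (∑ x, p x * W x y * (F r + ∑ x', z r x' * ((if x' = x then 1 else 0) - r x')))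
        = ∑ x, (p x * W x y * (F r - ∑ x', z r x' * r x') + p x * W x y * z r x) := by
          refine Finset.sum_congr rfl fun x _ => ?_
          rw [h1 x]; ring
      _ = (∑ x, p x * W x y) * (F r - ∑ x', z r x' * r x')
            + ∑ x, (∑ x'', p x'' * W x'' y) * Q y x * z r x := by
          rw [Finset.sum_add_distrib, ← Finset.sum_mul]
          congr 1
          exact Finset.sum_congr rfl fun x _ => by rw [hB y x]
      _ = (∑ x, p x * W x y) * (F r + ∑ x', z r x' * (Q y x' - r x')) := by
          rw [mul_add, Finset.mul_sum]
          rw [Finset.sum_congr rfl (fun x _ =>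
            show (∑ x'' : 𝒳, p x'' * W x'' y) * (z r x * (Q y x - r x))
              = (∑ x'' : 𝒳, p x'' * W x'' y) * Q y x * z r x
                - (∑ x'' : 𝒳, p x'' * W x'' y) * (z r x * r x) from by ring)]
          rw [Finset.sum_sub_distrib, ← Finset.mul_sum]
          ring
  constructor
  · refine ⟨Q, hQs, ?_⟩
    congr 2
    refine Finset.sum_congr rfl fun y _ => ?_
    rw [key y (Q y)]
    simp
  · rintro v ⟨q, hq, rfl⟩
    have hle : (∑ y, (∑ x, p x * W x y) * F (Q y))
        ≤ ∑ y, ∑ x, p x * W x y *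
            (F (q y) + ∑ x', z (q y) x' * ((if x' = x then 1 else 0) - q y x')) := by
      refine Finset.sum_le_sum fun y _ => ?_
      rw [key y (q y)]
      refine mul_le_mul_of_nonneg_left ?_ (hs0 y)
      have := hz (q y) (hq y) (Q y) (hQs y)
      calc F (Q y) ≤ F (q y) + ∑ x, z (q y) x * (Q y x - q y x) := this
        _ = F (q y) + ∑ x', z (q y) x' * (Q y x' - q y x') := rfl
    exact sub_le_sub_left (hη.monotone hle) _
end

section
/- Let F: Δ_𝒳 → ℝ be concave, η strictly increasing, and define H(X|Y) = η(∑_y p_Y(y) F(p_{X|Y}(·|y))). If X − Y − Z forms a Markov chain (i.e., p_{Z|X,Y} = p_{Z|Y}), then I_H(X;Z) ≤ I_H(X;Y), i.e., H(X|Y) ≤ H(X|Z). -/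
/-- Data-processing inequality for `H`-mutual information: if `X − Y − Z` is a
Markov chain then `H(X|Y) ≤ H(X|Z)`, equivalently `I_H(X;Z) ≤ I_H(X;Y)`. -/
theorem stmt_13 {𝒳 𝒴 𝒵 : Type*} [Fintype 𝒳] [Fintype 𝒴] [Fintype 𝒵]
    (F : (𝒳 → ℝ) → ℝ) (hFconc : ConcaveOn ℝ (simplex 𝒳) F)
    (η : ℝ → ℝ) (hη : StrictMono η)
    (p : 𝒳 → ℝ) (hp : p ∈ simplex 𝒳)
    (W : 𝒳 → 𝒴 → ℝ) (hW : ∀ x y, 0 ≤ W x y) (hWs : ∀ x, ∑ y, W x y = 1)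
    (V : 𝒴 → 𝒵 → ℝ) (hV : ∀ y z, 0 ≤ V y z) (hVs : ∀ y, ∑ z, V y z = 1) :
    (η (∑ y, (∑ x, p x * W x y) *
          F (fun x => p x * W x y / ∑ x', p x' * W x' y))
      ≤ η (∑ zz, (∑ x, ∑ y, p x * W x y * V y zz) *
          F (fun x => (∑ y, p x * W x y * V y zz) /
                      ∑ x', ∑ y, p x' * W x' y * V y zz))) ∧
    (η (F p) - η (∑ zz, (∑ x, ∑ y, p x * W x y * V y zz) *
          F (fun x => (∑ y, p x * W x y * V y zz) /
                      ∑ x', ∑ y, p x' * W x' y * V y zz))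
      ≤ η (F p) - η (∑ y, (∑ x, p x * W x y) *
          F (fun x => p x * W x y / ∑ x', p x' * W x' y))) := by
  set q : 𝒴 → ℝ := fun y => ∑ x, p x * W x y with hqdef
  set r : 𝒵 → ℝ := fun z => ∑ x, ∑ y, p x * W x y * V y z with hrdef
  set Py : 𝒴 → 𝒳 → ℝ := fun y x => p x * W x y / q y with hPydef
  set Qz : 𝒵 → 𝒳 → ℝ := fun z x => (∑ y, p x * W x y * V y z) / r z with hQzdef
  have hpW : ∀ x y, 0 ≤ p x * W x y := fun x y => mul_nonneg (hp.1 x) (hW x y)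
  have hq0 : ∀ y, 0 ≤ q y := fun y => Finset.sum_nonneg fun x _ => hpW x y
  have hqzero : ∀ y, q y = 0 → ∀ x, p x * W x y = 0 := by
    intro y hy x
    have := (Finset.sum_eq_zero_iff_of_nonneg (fun x _ => hpW x y)).1 hy
    exact this x (Finset.mem_univ x)
  have hr_eq : ∀ z, r z = ∑ y, q y * V y z := by
    intro z
    rw [hrdef]
    simp only
    rw [Finset.sum_comm]
    exact Finset.sum_congr rfl fun y _ => by rw [hqdef]; simp [Finset.sum_mul]
  have hr0 : ∀ z, 0 ≤ r z := by
    intro z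
    rw [hr_eq]
    exact Finset.sum_nonneg fun y _ => mul_nonneg (hq0 y) (hV y z)
  -- key inequality per z
  have key : ∀ z, ∑ y, q y * V y z * F (Py y) ≤ r z * F (Qz z) := by
    intro z
    rcases eq_or_lt_of_le (hr0 z) with hrz | hrz
    · have hall : ∀ y, q y * V y z = 0 := by
        intro y
        have := (Finset.sum_eq_zero_iff_of_nonneg
          (fun y _ => mul_nonneg (hq0 y) (hV y z))).1 ((hr_eq z) ▸ hrz.symm)
        exact this y (Finset.mem_univ y)
      rw [← hrz]
      simp [hall]
    · -- r z > 0
      set t : Finset 𝒴 := Finset.univ.filter (fun y => q y ≠ 0) with htdef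
      have hmem : ∀ y ∈ t, Py y ∈ simplex 𝒳 := by
        intro y hy
        rw [htdef, Finset.mem_filter] at hy
        have hqy : 0 < q y := lt_of_le_of_ne (hq0 y) (Ne.symm hy.2)
        constructor
        · intro x; exact div_nonneg (hpW x y) (hq0 y)
        · rw [hPydef]
          simp only
          rw [← Finset.sum_div]
          exact div_self hy.2
      have hw0 : ∀ y ∈ t, 0 ≤ q y * V y z / r z :=
        fun y _ => div_nonneg (mul_nonneg (hq0 y) (hV y z)) (hr0 z)
      have hw1 : ∑ y ∈ t, q y * V y z / r z = 1 := by
        rw [htdef, Finset.sum_filter_of_ne (by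
          intro y _ hne hq
          exact hne (by simp [hq]))]
        rw [← Finset.sum_div, ← hr_eq, div_self hrz.ne']
      have hcomb : ∑ y ∈ t, (q y * V y z / r z) • Py y = Qz z := by
        funext x
        rw [Finset.sum_apply]
        simp only [Pi.smul_apply]
        have : ∀ y ∈ t, (q y * V y z / r z) • Py y x = p x * W x y * V y z / r z := by
          intro y hy
          rw [htdef, Finset.mem_filter] at hy
          rw [hPydef]
          simp only [smul_eq_mul]
          have hq : q y ≠ 0 := hy.2
          have hr : r z ≠ 0 := hrz.ne'
          field_simp
        rw [Finset.sum_congr rfl this, htdef,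
          Finset.sum_filter_of_ne (by
            intro y _ hne hq
            exact hne (by simp [hqzero y hq x]))]
        show ∑ y, p x * W x y * V y z / r z = (∑ y, p x * W x y * V y z) / r z
        exact (Finset.sum_div _ _ _).symm
      have hjen := hFconc.le_map_sum hw0 hw1 hmem
      rw [hcomb] at hjen
      have h1 : ∑ y, q y * V y z * F (Py y) = ∑ y ∈ t, q y * V y z * F (Py y) := by
        rw [htdef]
        refine (Finset.sum_filter_of_ne ?_).symm
        intro y _ hne hq
        exact hne (by simp [hq])
      have h2 : ∑ y ∈ t, (q y * V y z / r z) • F (Py y)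
          = (∑ y ∈ t, q y * V y z * F (Py y)) / r z := by
        rw [Finset.sum_div]
        exact Finset.sum_congr rfl fun y _ => by
          simp only [smul_eq_mul]; ring
      rw [h2] at hjen
      rw [h1, ← div_le_iff₀' hrz] at *
      linarith [hjen]
  have main : ∑ y, q y * F (Py y) ≤ ∑ z, r z * F (Qz z) := by
    calc ∑ y, q y * F (Py y) = ∑ y, ∑ z, q y * V y z * F (Py y) := by
          refine Finset.sum_congr rfl fun y _ => ?_
          rw [← Finset.sum_mul, ← Finset.mul_sum, hVs y, mul_one]
      _ = ∑ z, ∑ y, q y * V y z * F (Py y) := Finset.sum_comm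
      _ ≤ ∑ z, r z * F (Qz z) := Finset.sum_le_sum fun z _ => key z
  exact ⟨hη.monotone main, sub_le_sub_left (hη.monotone main) _⟩
end

section
/- Conversely, if H = (η, F) with η strictly increasing is such that the η-averaged conditional entropy satisfies H(X) ≥ H(X|Y) for every finite joint distribution p_X p_{Y|X} (non-negativity of I_H), then F must be concave on the probability simplex. -/
/-- Converse: if the `η`-averaged conditional entropy satisfies
`H(X) ≥ H(X|Y)` for every prior and every channel to every finite `𝒴 = Fin n`,
then `F` is concave on the probability simplex. -/
theorem stmt_14 {𝒳 : Type*} [Fintype 𝒳]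
    (F : (𝒳 → ℝ) → ℝ) (hFcont : ContinuousOn F (simplex 𝒳))
    (η : ℝ → ℝ) (hη : StrictMono η) (hηc : Continuous η)
    (hpos : ∀ (n : ℕ) (p : 𝒳 → ℝ), p ∈ simplex 𝒳 →
      ∀ W : 𝒳 → Fin n → ℝ, (∀ x y, 0 ≤ W x y) → (∀ x, ∑ y, W x y = 1) →
        η (∑ y, (∑ x, p x * W x y) *
            F (fun x => p x * W x y / ∑ x', p x' * W x' y)) ≤ η (F p)) :
    ConcaveOn ℝ (simplex 𝒳) F := by
  constructor
  · intro x hx y hy a b ha hb hab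
    refine ⟨fun z => ?_, ?_⟩
    · have h1 := hx.1 z; have h2 := hy.1 z
      simp only [Pi.add_apply, Pi.smul_apply, smul_eq_mul]
      positivity
    · simp only [Pi.add_apply, Pi.smul_apply, smul_eq_mul, Finset.sum_add_distrib,
        ← Finset.mul_sum, hx.2, hy.2]
      linarith
  · intro p hp q hq a b ha hb hab
    rcases ha.eq_or_lt with ha0 | ha
    · have hb1 : b = 1 := by linarith
      subst hb1; rw [← ha0]
      simp
    rcases hb.eq_or_lt with hb0 | hb
    · have ha1 : a = 1 := by linarith
      subst ha1; rw [← hb0]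
      simp
    set r : 𝒳 → ℝ := a • p + b • q with hr_def
    have hrx : ∀ x, r x = a * p x + b * q x := fun x => by
      simp [hr_def, Pi.add_apply, Pi.smul_apply, smul_eq_mul]
    have hr0 : ∀ x, 0 ≤ r x := fun x => by
      rw [hrx]; have := hp.1 x; have := hq.1 x; positivity
    have hr : r ∈ simplex 𝒳 := by
      refine ⟨hr0, ?_⟩
      simp only [hrx, Finset.sum_add_distrib, ← Finset.mul_sum, hp.2, hq.2]
      linarith
    set W : 𝒳 → Fin 2 → ℝ := fun x y =>
      if y = 0 then (if r x = 0 then a else a * p x / r x)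
      else (if r x = 0 then b else b * q x / r x) with hW_def
    have hW0 : ∀ x, W x 0 = if r x = 0 then a else a * p x / r x := fun x => by
      simp [hW_def]
    have hW1 : ∀ x, W x 1 = if r x = 0 then b else b * q x / r x := fun x => by
      simp [hW_def]
    have hWnn : ∀ x y, 0 ≤ W x y := by
      intro x y
      have h1 := hp.1 x; have h2 := hq.1 x; have h3 := hr0 x
      simp only [hW_def]
      split <;> split <;> first | positivity | linarith
    have hWsum : ∀ x, ∑ y, W x y = 1 := by
      intro x
      rw [Fin.sum_univ_two, hW0, hW1]
      by_cases h : r x = 0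
      · simp [h, hab]
      · rw [if_neg h, if_neg h, ← add_div, ← hrx, div_self h]
    have hkey0 : ∀ x, r x * W x 0 = a * p x := by
      intro x
      rw [hW0]
      by_cases h : r x = 0
      · have hpx : p x = 0 := by
          have h1 := hp.1 x; have h2 := hq.1 x; have := hrx x
          nlinarith
        simp [h, hpx]
      · rw [if_neg h]; field_simp
    have hkey1 : ∀ x, r x * W x 1 = b * q x := by
      intro x
      rw [hW1]
      by_cases h : r x = 0
      · have hqx : q x = 0 := by
          have h1 := hp.1 x; have h2 := hq.1 x; have := hrx x
          nlinarith
        simp [h, hqx]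
      · rw [if_neg h]; field_simp
    have hsum0 : ∑ x, r x * W x 0 = a := by
      simp only [hkey0, ← Finset.mul_sum, hp.2, mul_one]
    have hsum1 : ∑ x, r x * W x 1 = b := by
      simp only [hkey1, ← Finset.mul_sum, hq.2, mul_one]
    have hpost0 : (fun x => r x * W x 0 / a) = p := by
      funext x
      rw [hkey0, mul_div_cancel_left₀ _ (ne_of_gt ha)]
    have hpost1 : (fun x => r x * W x 1 / b) = q := by
      funext x
      rw [hkey1, mul_div_cancel_left₀ _ (ne_of_gt hb)]
    have h := hpos 2 r hr W hWnn hWsum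
    rw [Fin.sum_univ_two, hsum0, hsum1, hpost0, hpost1] at h
    have := hη.le_iff_le.mp h
    simpa [smul_eq_mul] using this
end

section
/- For α ∈ (0,1) ∪ (1,∞), the Arimoto conditional entropy is at least the Hayashi conditional entropy, H_α^A(X|Y) ≥ H_α^H(X|Y); equivalently, Arimoto mutual information is at most Hayashi mutual information: I_α^A(X;Y) ≤ I_α^H(X;Y). -/
open Finset Real

/-- Key inequality: for weights `w` summing to 1 and nonneg `S`,
the Arimoto-vs-Hayashi log inequality. -/
lemma key_ineq {𝒴 : Type*} [Fintype 𝒴] (α : ℝ)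
    (hα : α ∈ Set.Ioo (0:ℝ) 1 ∪ Set.Ioi (1:ℝ))
    (w S : 𝒴 → ℝ) (hw : ∀ y, 0 ≤ w y) (hw1 : ∑ y, w y = 1)
    (hS : ∀ y, 0 ≤ S y) (hpos : ∃ y, 0 < w y ∧ 0 < S y) :
    (1 / (1 - α)) * Real.log (∑ y, w y * S y)
      ≤ (α / (1 - α)) * Real.log (∑ y, w y * S y ^ (1/α)) := by
  obtain ⟨y0, hwy0, hSy0⟩ := hpos
  have hα0 : 0 < α := by
    rcases hα with h | h
    · exact h.1
    · exact lt_trans one_pos h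
  set A := ∑ y, w y * S y with hA
  set B := ∑ y, w y * S y ^ (1/α) with hB
  have hApos : 0 < A := by
    apply Finset.sum_pos' (fun y _ => mul_nonneg (hw y) (hS y))
    exact ⟨y0, Finset.mem_univ _, mul_pos hwy0 hSy0⟩
  have hBpos : 0 < B := by
    apply Finset.sum_pos' (fun y _ => mul_nonneg (hw y) (Real.rpow_nonneg (hS y) _))
    exact ⟨y0, Finset.mem_univ _, mul_pos hwy0 (Real.rpow_pos_of_pos hSy0 _)⟩
  rcases hα with h | h
  · -- 0 < α < 1
    have h1α : (0:ℝ) < 1 - α := by linarith [h.2]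
    have hp : (1:ℝ) ≤ 1/α := one_le_one_div hα0 h.2.le
    have hAB : A ≤ B ^ α := by
      have := Real.arith_mean_le_rpow_mean Finset.univ w S
        (fun y _ => hw y) hw1 (fun y _ => hS y) hp
      rwa [one_div_one_div] at this
    have hlog : Real.log A ≤ α * Real.log B := by
      calc Real.log A ≤ Real.log (B ^ α) := Real.log_le_log hApos hAB
        _ = α * Real.log B := Real.log_rpow hBpos α
    have := mul_le_mul_of_nonneg_left hlog (le_of_lt (one_div_pos.mpr h1α))
    calc (1 / (1 - α)) * Real.log A ≤ (1 / (1 - α)) * (α * Real.log B) := this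
      _ = (α / (1 - α)) * Real.log B := by ring
  · -- α > 1
    have hα1 : (1:ℝ) < α := h
    have h1α : 1 - α < 0 := by linarith
    have hBA : B ^ α ≤ A := by
      have key := Real.rpow_arith_mean_le_arith_mean_rpow Finset.univ w
        (fun y => S y ^ (1/α)) (fun y _ => hw y) hw1
        (fun y _ => Real.rpow_nonneg (hS y) _) hα1.le
      have : ∀ y, (S y ^ (1/α)) ^ α = S y := by
        intro y
        rw [← Real.rpow_mul (hS y), one_div_mul_cancel (ne_of_gt hα0), Real.rpow_one]
      calc B ^ α ≤ ∑ y, w y * (S y ^ (1/α)) ^ α := key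
        _ = A := by simp only [this]; rfl
    have hlog : α * Real.log B ≤ Real.log A := by
      calc α * Real.log B = Real.log (B ^ α) := (Real.log_rpow hBpos α).symm
        _ ≤ Real.log A := Real.log_le_log (Real.rpow_pos_of_pos hBpos α) hBA
    have := mul_le_mul_of_nonpos_left hlog (by
      have : 1 / (1 - α) < 0 := div_neg_of_pos_of_neg one_pos h1α
      linarith : (1:ℝ) / (1 - α) ≤ 0)
    calc (1 / (1 - α)) * Real.log A ≤ (1 / (1 - α)) * (α * Real.log B) := this
      _ = (α / (1 - α)) * Real.log B := by ring

/-- Arimoto conditional entropy dominates Hayashi conditional entropy, hence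
Arimoto mutual information is at most Hayashi mutual information. -/
theorem stmt_15 {𝒳 𝒴 : Type*} [Fintype 𝒳] [Fintype 𝒴]
    (α : ℝ) (hα : α ∈ Set.Ioo (0:ℝ) 1 ∪ Set.Ioi (1:ℝ))
    (p : 𝒳 → ℝ) (hp : ∀ x, 0 ≤ p x) (hps : ∑ x, p x = 1)
    (W : 𝒳 → 𝒴 → ℝ) (hW : ∀ x y, 0 ≤ W x y) (hWs : ∀ x, ∑ y, W x y = 1) :
    ((1 / (1 - α)) * Real.log (∑ y, (∑ x, p x * W x y) *
        ∑ x, (p x * W x y / ∑ x', p x' * W x' y) ^ α)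
      ≤ (α / (1 - α)) * Real.log (∑ y, (∑ x, p x * W x y) *
        (∑ x, (p x * W x y / ∑ x', p x' * W x' y) ^ α) ^ (1/α))) ∧
    ((1 / (1 - α)) * Real.log (∑ x, p x ^ α)
        - (α / (1 - α)) * Real.log (∑ y, (∑ x, p x * W x y) *
            (∑ x, (p x * W x y / ∑ x', p x' * W x' y) ^ α) ^ (1/α))
      ≤ (1 / (1 - α)) * Real.log (∑ x, p x ^ α)
        - (1 / (1 - α)) * Real.log (∑ y, (∑ x, p x * W x y) *
            ∑ x, (p x * W x y / ∑ x', p x' * W x' y) ^ α)) := by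
  have hα0 : 0 < α := by
    rcases hα with h | h
    · exact h.1
    · exact lt_trans one_pos h
  set w : 𝒴 → ℝ := fun y => ∑ x, p x * W x y with hwdef
  set S : 𝒴 → ℝ := fun y => ∑ x, (p x * W x y / w y) ^ α with hSdef
  have hw : ∀ y, 0 ≤ w y := fun y =>
    Finset.sum_nonneg fun x _ => mul_nonneg (hp x) (hW x y)
  have hw1 : ∑ y, w y = 1 := by
    rw [hwdef]
    rw [Finset.sum_comm]
    simp_rw [← Finset.mul_sum, hWs, mul_one]
    exact hps
  have hS : ∀ y, 0 ≤ S y := fun y =>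
    Finset.sum_nonneg fun x _ => Real.rpow_nonneg
      (div_nonneg (mul_nonneg (hp x) (hW x y)) (hw y)) _
  have hpos : ∃ y, 0 < w y ∧ 0 < S y := by
    -- some y has w y > 0
    have : ∃ y, 0 < w y := by
      by_contra hc
      push_neg at hc
      have : ∑ y, w y = 0 := Finset.sum_eq_zero fun y _ => le_antisymm (hc y) (hw y)
      rw [hw1] at this; norm_num at this
    obtain ⟨y0, hwy0⟩ := this
    refine ⟨y0, hwy0, ?_⟩
    have : ∃ x, 0 < p x * W x y0 := by
      by_contra hc
      push_neg at hc
      have : w y0 = 0 := Finset.sum_eq_zero fun x _ =>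
        le_antisymm (hc x) (mul_nonneg (hp x) (hW x y0))
      rw [this] at hwy0; norm_num at hwy0
    obtain ⟨x0, hx0⟩ := this
    apply Finset.sum_pos' (fun x _ => Real.rpow_nonneg
      (div_nonneg (mul_nonneg (hp x) (hW x y0)) (hw y0)) _)
    exact ⟨x0, Finset.mem_univ _, Real.rpow_pos_of_pos (div_pos hx0 hwy0) _⟩
  have main := key_ineq α hα w S hw hw1 hS hpos
  refine ⟨main, ?_⟩
  exact sub_le_sub_left main _
end

section
/- For α ∈ (0,1) ∪ (1,∞), the Arimoto mutual information satisfies I_α^A(X;Y) = max_{q_{X|Y}} (α/(α−1)) log [ ∑_{x,y} p_{X_α}(x)^{1/α} p_{Y|X}(y|x) q_{X|Y}(x|y)^{(α−1)/α} ], where p_{X_α}(x) = p_X(x)^α / ∑_{x'} p_X(x')^α, and the maximum over families of full-support pmfs q_{X|Y}(·|y) is attained at q_{X|Y}(x|y) = p_X(x)^α p_{Y|X}(y|x)^α / ∑_{x'} p_X(x')^α p_{Y|X}(y|x')^α. -/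
open Finset Real

private lemma arimoto_holder_gt {ι : Type*} [Fintype ι] {α : ℝ} (hα : 1 < α)
    (u q : ι → ℝ) (hu : ∀ i, 0 ≤ u i) (hq : ∀ i, 0 < q i) (hqs : ∑ i, q i = 1) :
    ∑ i, u i * q i ^ ((α - 1)/α) ≤ (∑ i, u i ^ α) ^ (1/α) := by
  have hα0 : (0:ℝ) < α := lt_trans one_pos hα
  have hα1 : α - 1 ≠ 0 := by linarith
  have hpq : α.HolderConjugate (α/(α-1)) := Real.HolderConjugate.conjExponent hα
  have h := Real.inner_le_Lp_mul_Lq_of_nonneg Finset.univ hpq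
      (f := u) (g := fun i => q i ^ ((α - 1)/α))
      (fun i _ => hu i) (fun i _ => Real.rpow_nonneg (hq i).le _)
  have hsimp : ∀ i : ι, (q i ^ ((α-1)/α)) ^ (α/(α-1)) = q i := by
    intro i
    rw [← Real.rpow_mul (hq i).le]
    have : (α-1)/α * (α/(α-1)) = 1 := by field_simp
    rw [this, Real.rpow_one]
  calc ∑ i, u i * q i ^ ((α-1)/α)
      ≤ (∑ i, u i ^ α) ^ (1/α) * (∑ i, (q i ^ ((α-1)/α)) ^ (α/(α-1))) ^ (1/(α/(α-1))) := h
    _ = (∑ i, u i ^ α) ^ (1/α) := by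
        simp_rw [hsimp, hqs, Real.one_rpow, mul_one]

private lemma arimoto_holder_lt {ι : Type*} [Fintype ι] {α : ℝ} (hα0 : 0 < α) (hα : α < 1)
    (u q : ι → ℝ) (hu : ∀ i, 0 ≤ u i) (hq : ∀ i, 0 < q i) (hqs : ∑ i, q i = 1) :
    (∑ i, u i ^ α) ^ (1/α) ≤ ∑ i, u i * q i ^ ((α - 1)/α) := by
  have h1α : (0:ℝ) < 1 - α := by linarith
  set f : ι → ℝ := fun i => u i * q i ^ ((α-1)/α) with hf
  have hfnn : ∀ i, 0 ≤ f i := fun i => mul_nonneg (hu i) (Real.rpow_nonneg (hq i).le _)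
  have hpq : (1/α).HolderConjugate (1/(1-α)) := by
    constructor
    · rw [one_div, one_div, inv_inv, inv_inv, inv_one]; ring
    · exact one_div_pos.mpr hα0
    · exact one_div_pos.mpr h1α
  have hkey : ∀ i, u i ^ α = (f i) ^ α * (q i ^ (1-α)) := by
    intro i
    rw [hf]
    rw [Real.mul_rpow (hu i) (Real.rpow_nonneg (hq i).le _), ← Real.rpow_mul (hq i).le]
    have h2 : (α-1)/α * α = α - 1 := by field_simp
    rw [h2, mul_assoc, ← Real.rpow_add (hq i)]
    have h3 : α - 1 + (1 - α) = 0 := by ring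
    rw [h3, Real.rpow_zero, mul_one]
  have h := Real.inner_le_Lp_mul_Lq_of_nonneg Finset.univ hpq
      (f := fun i => (f i) ^ α) (g := fun i => q i ^ (1-α))
      (fun i _ => Real.rpow_nonneg (hfnn i) _) (fun i _ => Real.rpow_nonneg (hq i).le _)
  have e1 : ∀ i : ι, ((f i) ^ α) ^ (1/α) = f i := by
    intro i
    rw [← Real.rpow_mul (hfnn i)]
    have : α * (1/α) = 1 := by field_simp
    rw [this, Real.rpow_one]
  have e2 : ∀ i : ι, (q i ^ (1-α)) ^ (1/(1-α)) = q i := by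
    intro i
    rw [← Real.rpow_mul (hq i).le]
    have : (1-α) * (1/(1-α)) = 1 := by field_simp
    rw [this, Real.rpow_one]
  have h' : ∑ i, u i ^ α ≤ (∑ i, f i) ^ α := by
    simp only [one_div_one_div] at h
    simp only [e1, e2] at h
    rw [hqs, Real.one_rpow, mul_one] at h
    calc ∑ i, u i ^ α = ∑ i, (f i) ^ α * q i ^ (1-α) :=
          Finset.sum_congr rfl fun i _ => hkey i
      _ ≤ (∑ i, f i) ^ α := h
  have hsum_nn : 0 ≤ ∑ i, u i ^ α := Finset.sum_nonneg fun i _ => Real.rpow_nonneg (hu i) _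
  have hfs_nn : 0 ≤ ∑ i, f i := Finset.sum_nonneg fun i _ => hfnn i
  calc (∑ i, u i ^ α) ^ (1/α) ≤ ((∑ i, f i) ^ α) ^ (1/α) :=
        Real.rpow_le_rpow hsum_nn h' (by positivity)
    _ = ∑ i, f i := by
        rw [← Real.rpow_mul hfs_nn]
        have : α * (1/α) = 1 := by field_simp
        rw [this, Real.rpow_one]

private lemma arimoto_eq {ι : Type*} [Fintype ι] {α : ℝ} (hα0 : 0 < α) (_hα1 : α ≠ 1)
    (u : ι → ℝ) (hu : ∀ i, 0 ≤ u i) :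
    ∑ i, u i * (u i ^ α / ∑ j, u j ^ α) ^ ((α - 1)/α) = (∑ i, u i ^ α) ^ (1/α) := by
  have hαne : α ≠ 0 := ne_of_gt hα0
  set M := ∑ j, u j ^ α with hM
  by_cases hM0 : M = 0
  · have hz : ∀ j : ι, u j = 0 := by
      intro j
      have h0 : ∀ j ∈ Finset.univ, (0:ℝ) ≤ u j ^ α := fun j _ => Real.rpow_nonneg (hu j) _
      have := (Finset.sum_eq_zero_iff_of_nonneg h0).1 hM0 j (Finset.mem_univ j)
      rwa [Real.rpow_eq_zero (hu j) hαne] at this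
    simp only [hz, zero_mul, Finset.sum_const_zero, hM0]
    rw [Real.zero_rpow (by positivity : (1:ℝ)/α ≠ 0)]
  · have hMpos : 0 < M :=
      lt_of_le_of_ne (Finset.sum_nonneg fun j _ => Real.rpow_nonneg (hu j) _) (Ne.symm hM0)
    have hterm : ∀ i : ι, u i * (u i ^ α / M) ^ ((α-1)/α) = u i ^ α / M ^ ((α-1)/α) := by
      intro i
      rcases eq_or_lt_of_le (hu i) with h | h
      · rw [← h]
        simp [Real.zero_rpow hαne]
      · rw [Real.div_rpow (Real.rpow_nonneg (hu i) _) hMpos.le,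
          ← Real.rpow_mul (hu i)]
        have he : α * ((α-1)/α) = α - 1 := by field_simp
        rw [he, mul_div_assoc']
        congr 1
        nth_rewrite 1 [← Real.rpow_one (u i)]
        rw [← Real.rpow_add h]
        congr 1
        ring
    rw [Finset.sum_congr rfl fun i _ => hterm i, ← Finset.sum_div, ← hM]
    have h1 : (1:ℝ)/α = 1 - (α-1)/α := by field_simp; ring
    rw [h1, Real.rpow_sub hMpos, Real.rpow_one]

/-- Variational characterization of Arimoto mutual information of order `α`:
`I_α^A(X;Y) = max_{q_{X|Y}} (α/(α−1)) log ∑_{x,y} p_{X_α}(x)^{1/α} p_{Y|X}(y|x) q_{X|Y}(x|y)^{(α−1)/α}`,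
attained at the `α`-tilted posterior `q*(x|y) ∝ p_X(x)^α p_{Y|X}(y|x)^α`. -/
theorem stmt_17 {𝒳 𝒴 : Type*} [Fintype 𝒳] [Fintype 𝒴]
    (α : ℝ) (hα : α ∈ Set.Ioo (0:ℝ) 1 ∪ Set.Ioi (1:ℝ))
    (p : 𝒳 → ℝ) (hp : ∀ x, 0 < p x) (hps : ∑ x, p x = 1)
    (W : 𝒳 → 𝒴 → ℝ) (hW : ∀ x y, 0 ≤ W x y) (hWs : ∀ x, ∑ y, W x y = 1) :
    (∀ q : 𝒴 → 𝒳 → ℝ, (∀ y x, 0 < q y x) → (∀ y, ∑ x, q y x = 1) →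
      (α / (α - 1)) * Real.log (∑ y, ∑ x,
          (p x ^ α / ∑ x', p x' ^ α) ^ (1/α) * W x y * q y x ^ ((α - 1)/α))
        ≤ (α / (1 - α)) * Real.log ((∑ x, p x ^ α) ^ (1/α))
          - (α / (1 - α)) * Real.log (∑ y, (∑ x, p x * W x y) *
              (∑ x, (p x * W x y / ∑ x', p x' * W x' y) ^ α) ^ (1/α))) ∧
    (α / (α - 1)) * Real.log (∑ y, ∑ x,
        (p x ^ α / ∑ x', p x' ^ α) ^ (1/α) * W x y *
          (p x ^ α * W x y ^ α / ∑ x', p x' ^ α * W x' y ^ α) ^ ((α - 1)/α))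
      = (α / (1 - α)) * Real.log ((∑ x, p x ^ α) ^ (1/α))
        - (α / (1 - α)) * Real.log (∑ y, (∑ x, p x * W x y) *
            (∑ x, (p x * W x y / ∑ x', p x' * W x' y) ^ α) ^ (1/α)) := by
  have hα0 : (0:ℝ) < α := by
    rcases hα with ⟨h, _⟩ | h
    · exact h
    · exact lt_trans one_pos h
  have hαne : α ≠ 0 := ne_of_gt hα0
  have hαne1 : α ≠ 1 := by
    rcases hα with ⟨_, h⟩ | h
    · exact ne_of_lt h
    · exact ne_of_gt h
  have hα1ne : α - 1 ≠ 0 := by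
    rcases hα with ⟨_, h⟩ | h
    · intro hc; rw [sub_eq_zero] at hc; exact (ne_of_lt h) hc
    · intro hc; rw [sub_eq_zero] at hc; exact (ne_of_gt h) hc
  -- nonemptiness and a positive entry of W
  have hXne : (Finset.univ : Finset 𝒳).Nonempty := by
    rcases (Finset.univ : Finset 𝒳).eq_empty_or_nonempty with h | h
    · rw [h, Finset.sum_empty] at hps; norm_num at hps
    · exact h
  obtain ⟨x0, -⟩ := hXne
  have hsumW : ∑ y : 𝒴, (0:ℝ) < ∑ y : 𝒴, W x0 y := by
    rw [Finset.sum_const_zero, hWs x0]; norm_num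
  obtain ⟨y0, -, hy0⟩ := Finset.exists_lt_of_sum_lt hsumW
  -- N
  set N := ∑ x, p x ^ α with hNdef
  have hN : 0 < N := Finset.sum_pos (fun x _ => Real.rpow_pos_of_pos (hp x) α)
    ⟨x0, Finset.mem_univ x0⟩
  have hNα : 0 < N ^ (1/α) := Real.rpow_pos_of_pos hN _
  have hpx : ∀ x : 𝒳, (p x ^ α / N) ^ (1/α) = p x / N ^ (1/α) := by
    intro x
    rw [Real.div_rpow (Real.rpow_nonneg (hp x).le α) hN.le, ← Real.rpow_mul (hp x).le]
    have : α * (1/α) = 1 := by field_simp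
    rw [this, Real.rpow_one]
  -- C
  set C := ∑ y, (∑ x, (p x * W x y) ^ α) ^ (1/α) with hCdef
  have huynn : ∀ y, ∀ x : 𝒳, 0 ≤ p x * W x y := fun y x => mul_nonneg (hp x).le (hW x y)
  have hMy0 : 0 < ∑ x, (p x * W x y0) ^ α :=
    Finset.sum_pos' (fun x _ => Real.rpow_nonneg (huynn y0 x) _)
      ⟨x0, Finset.mem_univ x0, Real.rpow_pos_of_pos (mul_pos (hp x0) hy0) _⟩
  have hC : 0 < C :=
    Finset.sum_pos' (fun y _ => Real.rpow_nonneg (Finset.sum_nonneg fun x _ =>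
        Real.rpow_nonneg (huynn y x) _) _)
      ⟨y0, Finset.mem_univ y0, Real.rpow_pos_of_pos hMy0 _⟩
  -- Step B: the Arimoto conditional norm term equals C
  have hS : (∑ y, (∑ x, p x * W x y) *
      (∑ x, (p x * W x y / ∑ x', p x' * W x' y) ^ α) ^ (1/α)) = C := by
    refine Finset.sum_congr rfl fun y _ => ?_
    by_cases h0 : (∑ x, p x * W x y) = 0
    · rw [h0, zero_mul]
      have hz : ∀ x : 𝒳, p x * W x y = 0 := fun x =>
        (Finset.sum_eq_zero_iff_of_nonneg (fun x _ => huynn y x)).1 h0 x (Finset.mem_univ x)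
      rw [Finset.sum_congr rfl fun x _ => by rw [hz x, Real.zero_rpow hαne],
        Finset.sum_const_zero, Real.zero_rpow (by positivity : (1:ℝ)/α ≠ 0)]
    · have hpos : 0 < ∑ x, p x * W x y :=
        lt_of_le_of_ne (Finset.sum_nonneg fun x _ => huynn y x) (Ne.symm h0)
      have h1 : α * (1/α) = 1 := by field_simp
      have e1 : (∑ x, (p x * W x y / ∑ x', p x' * W x' y) ^ α)
          = (∑ x, (p x * W x y) ^ α) / (∑ x, p x * W x y) ^ α :=
        calc ∑ x, (p x * W x y / ∑ x', p x' * W x' y) ^ α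
            = ∑ x, (p x * W x y) ^ α / (∑ x', p x' * W x' y) ^ α :=
              Finset.sum_congr rfl fun x _ => Real.div_rpow (huynn y x) hpos.le α
          _ = (∑ x, (p x * W x y) ^ α) / (∑ x, p x * W x y) ^ α := by
              rw [Finset.sum_div]
      have e2 : ((∑ x, (p x * W x y) ^ α) / (∑ x, p x * W x y) ^ α) ^ (1/α)
          = (∑ x, (p x * W x y) ^ α) ^ (1/α) / (∑ x, p x * W x y) := by
        rw [Real.div_rpow (Finset.sum_nonneg fun x _ => Real.rpow_nonneg (huynn y x) _)
            (Real.rpow_nonneg hpos.le α), ← Real.rpow_mul hpos.le, h1, Real.rpow_one]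
      rw [e1, e2, mul_div_assoc', mul_div_cancel_left₀ _ (ne_of_gt hpos)]
  -- RHS rewriting
  have hRHS : (α / (1 - α)) * Real.log (N ^ (1/α)) - (α / (1 - α)) * Real.log C
      = (α / (α - 1)) * Real.log (C / N ^ (1/α)) := by
    rw [Real.log_div (ne_of_gt hC) (ne_of_gt hNα)]
    have h1 : (1:ℝ) - α ≠ 0 := fun hc => hα1ne (by linarith [sub_eq_zero.mp hc])
    field_simp
    ring
  constructor
  · -- inequality for arbitrary q
    intro q hq hqs
    rw [hS, hRHS]
    set G := ∑ y, ∑ x, p x * W x y * q y x ^ ((α - 1)/α) with hGdef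
    have hL : (∑ y, ∑ x, (p x ^ α / N) ^ (1/α) * W x y * q y x ^ ((α - 1)/α))
        = G / N ^ (1/α) := by
      rw [hGdef, Finset.sum_div]
      refine Finset.sum_congr rfl fun y _ => ?_
      rw [Finset.sum_div]
      refine Finset.sum_congr rfl fun x _ => ?_
      rw [hpx x]
      ring
    rw [hL]
    have hGpos : 0 < G := by
      refine Finset.sum_pos' (fun y _ => Finset.sum_nonneg fun x _ =>
        mul_nonneg (huynn y x) (Real.rpow_nonneg (hq y x).le _)) ⟨y0, Finset.mem_univ y0, ?_⟩
      refine Finset.sum_pos' (fun x _ =>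
        mul_nonneg (huynn y0 x) (Real.rpow_nonneg (hq y0 x).le _))
        ⟨x0, Finset.mem_univ x0, ?_⟩
      exact mul_pos (mul_pos (hp x0) hy0) (Real.rpow_pos_of_pos (hq y0 x0) _)
    rcases hα with ⟨-, hlt⟩ | hgt
    · -- 0 < α < 1 : coefficient nonpositive, C ≤ G
      have hCG : C ≤ G := by
        refine Finset.sum_le_sum fun y _ => ?_
        exact arimoto_holder_lt hα0 hlt (fun x => p x * W x y) (q y)
          (huynn y) (hq y) (hqs y)
      have hlog : Real.log (C / N ^ (1/α)) ≤ Real.log (G / N ^ (1/α)) := by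
        have : C / N ^ (1/α) ≤ G / N ^ (1/α) := by gcongr
        exact Real.log_le_log (by positivity) this
      have hcoef : α / (α - 1) ≤ 0 :=
        div_nonpos_of_nonneg_of_nonpos hα0.le (by linarith)
      exact mul_le_mul_of_nonpos_left hlog hcoef
    · -- 1 < α : coefficient nonneg, G ≤ C
      have hGC : G ≤ C := by
        refine Finset.sum_le_sum fun y _ => ?_
        exact arimoto_holder_gt hgt (fun x => p x * W x y) (q y)
          (huynn y) (hq y) (hqs y)
      have hlog : Real.log (G / N ^ (1/α)) ≤ Real.log (C / N ^ (1/α)) := by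
        have : G / N ^ (1/α) ≤ C / N ^ (1/α) := by gcongr
        exact Real.log_le_log (by positivity) this
      have hcoef : 0 ≤ α / (α - 1) :=
        div_nonneg hα0.le (by linarith [Set.mem_Ioi.mp hgt])
      exact mul_le_mul_of_nonneg_left hlog hcoef
  · -- equality at the tilted posterior
    rw [hS, hRHS]
    have hmul : ∀ (y : 𝒴) (x : 𝒳), p x ^ α * W x y ^ α = (p x * W x y) ^ α := fun y x =>
      (Real.mul_rpow (hp x).le (hW x y)).symm
    have hEq : (∑ y, ∑ x, (p x ^ α / N) ^ (1/α) * W x y *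
        (p x ^ α * W x y ^ α / ∑ x', p x' ^ α * W x' y ^ α) ^ ((α - 1)/α))
        = C / N ^ (1/α) := by
      rw [hCdef, Finset.sum_div]
      refine Finset.sum_congr rfl fun y _ => ?_
      simp only [hpx, hmul]
      calc ∑ x, p x / N ^ (1/α) * W x y *
            ((p x * W x y) ^ α / ∑ x', (p x' * W x' y) ^ α) ^ ((α - 1)/α)
          = (∑ x, p x * W x y *
            ((p x * W x y) ^ α / ∑ x', (p x' * W x' y) ^ α) ^ ((α - 1)/α)) / N ^ (1/α) := by
            rw [Finset.sum_div]
            exact Finset.sum_congr rfl fun x _ => by ring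
        _ = (∑ x, (p x * W x y) ^ α) ^ (1/α) / N ^ (1/α) := by
            rw [arimoto_eq hα0 hαne1 (fun x => p x * W x y) (huynn y)]
    rw [hEq]
end

section
/- The two functionals used in the Arimoto–Blahut algorithms for Arimoto capacity coincide after α-tilting of the conditional argument: for every pmf p_X and every family q_{X|Y} of full-support pmfs, F_α^{A2}(p_X, q_{X|Y}) := (α/(α−1)) log [ ∑_{x,y} p_{X_α}(x)^{1/α} p_{Y|X}(y|x) q_{X_α|Y}(x|y)^{(α−1)/α} ] equals (α/(α−1)) log [ E_{X,Y}[ (q_{X|Y}(X|Y)/‖q_{X|Y}(·|Y)‖_α)^{α−1} ] / ‖p_X‖_α ], where q_{X_α|Y}(x|y) = q_{X|Y}(x|y)^α / ∑_{x'} q_{X|Y}(x'|y)^α. -/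
/-- The two Arimoto–Blahut functionals for Arimoto capacity coincide after
`α`-tilting of the conditional argument: `F_α^{A2}(p_X, q_{X|Y})` equals the
tilted form `(α/(α−1)) log [E_{X,Y}[(q_{X|Y}(X|Y)/‖q_{X|Y}(·|Y)‖_α)^{α−1}] / ‖p_X‖_α]`. -/
theorem stmt_19 {𝒳 𝒴 : Type*} [Fintype 𝒳] [Fintype 𝒴]
    (α : ℝ) (hα : α ∈ Set.Ioo (0:ℝ) 1 ∪ Set.Ioi (1:ℝ))
    (p : 𝒳 → ℝ) (hp : ∀ x, 0 < p x) (hps : ∑ x, p x = 1)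
    (W : 𝒳 → 𝒴 → ℝ) (hW : ∀ x y, 0 ≤ W x y) (hWs : ∀ x, ∑ y, W x y = 1)
    (q : 𝒴 → 𝒳 → ℝ) (hq : ∀ y x, 0 < q y x) (hqs : ∀ y, ∑ x, q y x = 1) :
    (α / (α - 1)) * Real.log (∑ y, ∑ x,
        (p x ^ α / ∑ x', p x' ^ α) ^ (1/α) * W x y *
          (q y x ^ α / ∑ x', q y x' ^ α) ^ ((α - 1)/α))
      = (α / (α - 1)) * Real.log
          ((∑ y, ∑ x, p x * W x y *
              (q y x / (∑ x', q y x' ^ α) ^ (1/α)) ^ (α - 1))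
            / (∑ x, p x ^ α) ^ (1/α)) := by
  have hα0 : 0 < α := by
    rcases hα with h | h
    · exact h.1
    · have := Set.mem_Ioi.mp h; linarith
  have hαne : α ≠ 0 := ne_of_gt hα0
  have hne : Nonempty 𝒳 := by
    by_contra h
    rw [not_nonempty_iff] at h
    simp at hps
  have hSp : 0 < ∑ x', p x' ^ α :=
    Finset.sum_pos (fun x _ => Real.rpow_pos_of_pos (hp x) α) Finset.univ_nonempty
  have key : ∀ y x, (p x ^ α / ∑ x', p x' ^ α) ^ (1/α) * W x y *
      (q y x ^ α / ∑ x', q y x' ^ α) ^ ((α - 1)/α)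
      = (p x * W x y * (q y x / (∑ x', q y x' ^ α) ^ (1/α)) ^ (α - 1))
          / (∑ x', p x' ^ α) ^ (1/α) := by
    intro y x
    have hSq : 0 < ∑ x', q y x' ^ α :=
      Finset.sum_pos (fun x' _ => Real.rpow_pos_of_pos (hq y x') α) Finset.univ_nonempty
    have h1 : (p x ^ α / ∑ x', p x' ^ α) ^ (1/α)
        = p x / (∑ x', p x' ^ α) ^ (1/α) := by
      rw [Real.div_rpow (Real.rpow_nonneg (hp x).le α) hSp.le,
        ← Real.rpow_mul (hp x).le, mul_one_div, div_self hαne, Real.rpow_one]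
    have h2 : (q y x ^ α / ∑ x', q y x' ^ α) ^ ((α - 1)/α)
        = (q y x / (∑ x', q y x' ^ α) ^ (1/α)) ^ (α - 1) := by
      rw [Real.div_rpow (Real.rpow_nonneg (hq y x).le α) hSq.le,
        Real.div_rpow (hq y x).le (Real.rpow_nonneg hSq.le _),
        ← Real.rpow_mul (hq y x).le, ← Real.rpow_mul hSq.le]
      rw [mul_comm α ((α-1)/α), div_mul_cancel₀ _ hαne,
        one_div, inv_mul_eq_div]
    rw [h1, h2]; ring
  congr 2
  calc (∑ y, ∑ x, (p x ^ α / ∑ x', p x' ^ α) ^ (1/α) * W x y *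
          (q y x ^ α / ∑ x', q y x' ^ α) ^ ((α - 1)/α))
      = ∑ y, ∑ x, (p x * W x y * (q y x / (∑ x', q y x' ^ α) ^ (1/α)) ^ (α - 1))
          / (∑ x', p x' ^ α) ^ (1/α) := by
        refine Finset.sum_congr rfl fun y _ => Finset.sum_congr rfl fun x _ => key y x
    _ = _ := by simp only [Finset.sum_div]
end
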